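/- arXiv:1602.07667 — 2 statements merged into one kernel-verified Lean document; each statement's English description precedes it below -/
import Mathlib

section
/- Let κ be a regular infinite cardinal and suppose a two-step reachability game is less than κ-branching, i.e., for every state q and every verifier move a ∈ M(q), the set of possible outcome states { o(q,a,b) | b a response } has cardinality < κ. Then every state that has a rank has rank strictly less than κ, and hence W(κ) = W(κ+1), i.e., the iteration is stable at κ. -/
/-- A two-step reachability game: states `S`, for each state a nonempty type
of verifier moves, for each move a nonempty type of falsifier responses,
an outcome function `o`, and a target set `T`. -/
structure Game where
  S : Type
  M : S → Type
  M_ne : ∀ q, Nonempty (M q)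
  B : (q : S) → M q → Type
  B_ne : ∀ q a, Nonempty (B q a)
  o : (q : S) → (a : M q) → B q a → S
  T : Set S

/-- The one-step verifier operator `F(X) = T ∪ { q | ∃ a ∈ M(q), ∀ b, o(q,a,b) ∈ X }`. -/
def Game.step (G : Game) (X : Set G.S) : Set G.S :=
  G.T ∪ { q | ∃ a : G.M q, ∀ b : G.B q a, G.o q a b ∈ X }

/-- The winning-region iteration: `W 0 = T`, `W (γ+1) = step (W γ)`,
and `W λ = ⋃_{γ<λ} W γ` for limit `λ`. -/
noncomputable def Game.W (G : Game) (γ : Ordinal.{0}) : Set G.S :=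
  Ordinal.limitRecOn γ G.T (fun _ X => G.step X)
    (fun δ _ ih => ⋃ x : { β : Ordinal.{0} // β < δ }, ih x.1 x.2)

/-- The rank of a state: the least ordinal `γ` with `q ∈ W γ`
(meaningful when such an ordinal exists). -/
noncomputable def Game.rank (G : Game) (q : G.S) : Ordinal.{0} :=
  sInf { γ | q ∈ G.W γ }

/-!
Since the verifier operator `step` is monotone, every stage `W γ` is contained in any set `X`
with `step X ⊆ X`. For a limit `δ` whose cofinality exceeds the branching, `W δ` is such a set:
the fewer than `cof δ` outcomes of a move all lie in stages below `δ`, hence below their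
supremum, which is still below `δ`. For regular `κ` this applies to `δ = κ.ord`, so the whole
iteration is trapped in `W κ.ord`, the union of the stages below `κ.ord`.
-/

namespace Game

variable (G : Game)

open Order Cardinal

lemma W_zero : G.W 0 = G.T := Ordinal.limitRecOn_zero ..

lemma W_succ (γ : Ordinal.{0}) : G.W (γ + 1) = G.step (G.W γ) :=
  Ordinal.limitRecOn_add_one ..

lemma mem_W_of_isSuccLimit {δ : Ordinal.{0}} (hδ : IsSuccLimit δ) {q : G.S} :
    q ∈ G.W δ ↔ ∃ γ < δ, q ∈ G.W γ := by
  rw [W, Ordinal.limitRecOn_limit _ _ _ _ hδ]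
  simp only [Set.mem_iUnion, Subtype.exists, exists_prop]
  rfl

lemma T_subset_step (X : Set G.S) : G.T ⊆ G.step X := Set.subset_union_left

lemma step_mono {X Y : Set G.S} (h : X ⊆ Y) : G.step X ⊆ G.step Y := by
  rintro q (hq | ⟨a, ha⟩)
  · exact Or.inl hq
  · exact Or.inr ⟨a, fun b => h (ha b)⟩

lemma W_subset_W_succ (γ : Ordinal.{0}) : G.W γ ⊆ G.W (γ + 1) := by
  induction γ using Ordinal.limitRecOn with
  | zero => rw [W_succ, W_zero]; exact G.T_subset_step _
  | add_one α ih => rw [G.W_succ, G.W_succ (α + 1)]; exact G.step_mono ih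
  | limit δ hδ ih =>
    intro q hq
    obtain ⟨γ, hγ, hqγ⟩ := (G.mem_W_of_isSuccLimit hδ).1 hq
    have hq' := ih γ hγ hqγ
    rw [W_succ] at hq' ⊢
    exact G.step_mono (fun x hx => (G.mem_W_of_isSuccLimit hδ).2 ⟨γ, hγ, hx⟩) hq'

lemma W_mono : Monotone G.W := by
  intro γ δ hγδ
  induction δ using Ordinal.limitRecOn with
  | zero => rw [nonpos_iff_eq_zero.1 hγδ]
  | add_one α ih =>
    rcases hγδ.eq_or_lt with rfl | hlt
    · exact le_rfl
    · exact (ih (lt_add_one_iff.1 hlt)).trans (G.W_subset_W_succ α)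
  | limit δ hδ _ =>
    rcases hγδ.eq_or_lt with rfl | hlt
    · exact le_rfl
    · exact fun q hq => (G.mem_W_of_isSuccLimit hδ).2 ⟨γ, hlt, hq⟩

lemma W_subset_of_step_subset {X : Set G.S} (hX : G.step X ⊆ X) (γ : Ordinal.{0}) :
    G.W γ ⊆ X := by
  induction γ using Ordinal.limitRecOn with
  | zero => rw [W_zero]; exact (G.T_subset_step X).trans hX
  | add_one α ih => rw [W_succ]; exact (G.step_mono ih).trans hX
  | limit δ hδ ih =>
    intro q hq
    obtain ⟨γ, hγ, hqγ⟩ := (G.mem_W_of_isSuccLimit hδ).1 hq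
    exact ih γ hγ hqγ

lemma step_W_subset_of_lt_cof {δ : Ordinal.{0}} (hδ : IsSuccLimit δ)
    (hbr : ∀ (q : G.S) (a : G.M q), #(Set.range (G.o q a)) < δ.cof) :
    G.step (G.W δ) ⊆ G.W δ := by
  rintro q (hT | ⟨a, ha⟩)
  · exact G.W_mono hδ.bot_lt.le (G.W_zero ▸ hT)
  · have hstage : ∀ x : Set.range (G.o q a), ∃ γ < δ, (x : G.S) ∈ G.W γ := by
      rintro ⟨_, b, rfl⟩
      exact (G.mem_W_of_isSuccLimit hδ).1 (ha b)
    choose f hfδ hf using hstage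
    have hsup : ⨆ x, f x < δ := Ordinal.iSup_lt_of_lt_cof (hbr q a) hfδ
    refine G.W_mono (hδ.add_one_lt hsup).le ?_
    rw [W_succ]
    exact Or.inr ⟨a, fun b =>
      G.W_mono (Ordinal.le_iSup f ⟨_, b, rfl⟩) (hf ⟨_, b, rfl⟩)⟩

lemma rank_le {q : G.S} {γ : Ordinal.{0}} (hq : q ∈ G.W γ) : G.rank q ≤ γ := csInf_le' hq

end Game

/-- If `κ` is a regular infinite cardinal and the game is less than
`κ`-branching, then every state having a rank has rank `< κ`, and the
iteration is stable at `κ`: `W κ = W (κ+1)`. -/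
theorem regular_branching_stable (G : Game) (κ : Cardinal.{0})
    (hκ : κ.IsRegular)
    (hbr : ∀ (q : G.S) (a : G.M q), Cardinal.mk (Set.range (G.o q a)) < κ) :
    (∀ q : G.S, (∃ δ, q ∈ G.W δ) → G.rank q < κ.ord) ∧
    G.W κ.ord = G.W (κ.ord + 1) := by
  have hlim : Order.IsSuccLimit κ.ord := Cardinal.isSuccLimit_ord hκ.aleph0_le
  have hclosed : G.step (G.W κ.ord) ⊆ G.W κ.ord :=
    G.step_W_subset_of_lt_cof hlim (by rwa [hκ.cof_ord])
  refine ⟨fun q ⟨δ, hqδ⟩ => ?_, ?_⟩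
  · obtain ⟨γ, hγ, hqγ⟩ :=
      (G.mem_W_of_isSuccLimit hlim).1 (G.W_subset_of_step_subset hclosed δ hqδ)
    exact (G.rank_le hqγ).trans_lt hγ
  · exact (G.W_subset_W_succ _).antisymm (G.W_subset_of_step_subset hclosed _)
end

section
/- König-type lemma for safety: in an image-finite two-step reachability game, if for every natural number n the falsifier can keep the play outside T for n steps from state q (i.e., q ∈ V(n) for all n < ω), then the falsifier can keep the play outside T forever: there is an infinite sequence of states q = q0, q1, q2, … with each qk ∉ T and each q(k+1) an outcome of some verifier move and falsifier response at qk, such that this holds against every verifier move choice (formally: q ∈ V(γ) for every ordinal γ). -/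
/-- The one-step falsifier operator `X ↦ Tᶜ ∩ { q | ∀ a, ∃ b, o(q,a,b) ∈ X }`. -/
def Game.dstep (G : Game) (X : Set G.S) : Set G.S :=
  G.Tᶜ ∩ { q | ∀ a : G.M q, ∃ b : G.B q a, G.o q a b ∈ X }

/-- The dual iteration: `V 0 = Tᶜ`, `V (γ+1) = dstep (V γ)`, and
`V λ = ⋂_{γ<λ} V γ` for limit `λ`. -/
noncomputable def Game.V (G : Game) (γ : Ordinal.{0}) : Set G.S :=
  Ordinal.limitRecOn γ G.Tᶜ (fun _ X => G.dstep X)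
    (fun δ _ ih => ⋂ x : { β : Ordinal.{0} // β < δ }, ih x.1 x.2)

/-!
The set `⋂ n, V n` of states safe at every finite depth is a post-fixed point of the falsifier
operator `dstep`: a verifier move has only finitely many outcomes, one of them safe at each depth,
so by pigeonhole (the `V n` decrease) one outcome is safe at every depth. A post-fixed point of
`dstep` lies in every `V γ` by transfinite induction, and from any of its states the falsifier can
pick a safe response forever, which gives the infinite play.
-/

theorem Set.Finite.nonempty_inter_iInter_of_antitone {α ι : Type*} [Preorder ι]
    [IsDirectedOrder ι] [Nonempty ι] {s : Set α} (hs : s.Finite) {V : ι → Set α}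
    (hV : Antitone V) (h : ∀ i, (s ∩ V i).Nonempty) : (s ∩ ⋂ i, V i).Nonempty := by
  by_contra hempty
  -- each point of `s` leaves `V` for good at some index; finitely many such indices have a bound
  have hleave : ∀ x ∈ s, ∀ᶠ i in Filter.atTop, x ∉ V i := by
    intro x hx
    obtain ⟨i₀, hi₀⟩ : ∃ i, x ∉ V i := by
      by_contra! hall
      exact hempty ⟨x, hx, Set.mem_iInter.2 hall⟩
    exact Filter.eventually_atTop.2 ⟨i₀, fun i hi hxi => hi₀ (hV hi hxi)⟩
  obtain ⟨i, hi⟩ := ((Filter.eventually_all_finite hs).2 hleave).exists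
  obtain ⟨x, hxs, hxV⟩ := h i
  exact hi x hxs hxV

namespace Game

variable (G : Game)

@[simp]
theorem V_zero : G.V 0 = G.Tᶜ :=
  Ordinal.limitRecOn_zero _ _ _

@[simp]
theorem V_add_one (γ : Ordinal.{0}) : G.V (γ + 1) = G.dstep (G.V γ) :=
  Ordinal.limitRecOn_add_one _ _ _ _

theorem V_of_isSuccLimit {γ : Ordinal.{0}} (hγ : Order.IsSuccLimit γ) :
    G.V γ = ⋂ β : { β : Ordinal.{0} // β < γ }, G.V β :=
  Ordinal.limitRecOn_limit _ _ _ _ hγ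

variable {G}

theorem dstep_subset_compl (X : Set G.S) : G.dstep X ⊆ G.Tᶜ :=
  Set.inter_subset_left

theorem dstep_mono {X Y : Set G.S} (h : X ⊆ Y) : G.dstep X ⊆ G.dstep Y :=
  fun _ ⟨hT, hq⟩ => ⟨hT, fun a => (hq a).imp fun _ hb => h hb⟩

variable (G) in
theorem V_nat_antitone : Antitone fun n : ℕ => G.V n := by
  refine antitone_nat_of_succ_le fun n => ?_
  rw [Nat.cast_succ, V_add_one]
  induction n with
  | zero => simpa using dstep_subset_compl G.Tᶜ
  | succ n ih =>
    rw [Nat.cast_succ, V_add_one]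
    exact dstep_mono ih

theorem iInter_V_nat_subset_dstep (hfin : ∀ (q : G.S) (a : G.M q), (Set.range (G.o q a)).Finite) :
    ⋂ n : ℕ, G.V n ⊆ G.dstep (⋂ n : ℕ, G.V n) := by
  intro q hq
  rw [Set.mem_iInter] at hq
  refine ⟨by simpa using hq 0, fun a => ?_⟩
  have hdepth : ∀ n : ℕ, (Set.range (G.o q a) ∩ G.V n).Nonempty := by
    intro n
    have hq' := hq (n + 1)
    rw [Nat.cast_succ, V_add_one] at hq'
    obtain ⟨b, hb⟩ := hq'.2 a
    exact ⟨_, Set.mem_range_self b, hb⟩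
  obtain ⟨_, ⟨b, rfl⟩, hb⟩ := (hfin q a).nonempty_inter_iInter_of_antitone (V_nat_antitone G) hdepth
  exact ⟨b, hb⟩

theorem subset_V_of_subset_dstep {X : Set G.S} (hX : X ⊆ G.dstep X) (γ : Ordinal.{0}) :
    X ⊆ G.V γ := by
  induction γ using Ordinal.limitRecOn with
  | zero => simpa using hX.trans (dstep_subset_compl X)
  | add_one γ ih => simpa using hX.trans (dstep_mono ih)
  | limit γ hγ ih =>
    rw [V_of_isSuccLimit G hγ]
    exact Set.subset_iInter fun β => ih β.1 β.2

theorem exists_play_of_subset_dstep {X : Set G.S} (hX : X ⊆ G.dstep X) {q : G.S} (hq : q ∈ X) :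
    ∃ f : ℕ → G.S, f 0 = q ∧
      ∀ k : ℕ, f k ∉ G.T ∧ ∃ (a : G.M (f k)) (b : G.B (f k) a), f (k + 1) = G.o (f k) a b := by
  have hnext : ∀ p : X, ∃ p' : X, p.1 ∉ G.T ∧ ∃ (a : G.M p) (b : G.B p a), p'.1 = G.o p a b := by
    rintro ⟨p, hp⟩
    obtain ⟨hT, hmove⟩ := hX hp
    obtain ⟨b, hb⟩ := hmove (Classical.choice (G.M_ne p))
    exact ⟨⟨_, hb⟩, hT, _, b, rfl⟩
  choose next hnext using hnext
  refine ⟨fun k => (next^[k] ⟨q, hq⟩).1, rfl, fun k => ?_⟩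
  simpa only [Function.iterate_succ_apply'] using hnext (next^[k] ⟨q, hq⟩)

end Game

/-- König-type lemma for safety: in an image-finite game, if the falsifier can
keep the play outside `T` for `n` steps from `q` for every `n < ω`, then there
is an infinite play from `q` staying outside `T`, and indeed `q ∈ V γ` for
every ordinal `γ`. -/
theorem koenig_safety (G : Game)
    (hfin : ∀ (q : G.S) (a : G.M q), (Set.range (G.o q a)).Finite)
    (q : G.S) (h : ∀ n : ℕ, q ∈ G.V (n : Ordinal.{0})) :
    (∃ f : ℕ → G.S, f 0 = q ∧
      ∀ k : ℕ, f k ∉ G.T ∧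
        ∃ (a : G.M (f k)) (b : G.B (f k) a), f (k + 1) = G.o (f k) a b) ∧
    (∀ γ : Ordinal.{0}, q ∈ G.V γ) := by
  have hsafe : q ∈ ⋂ n : ℕ, G.V n := Set.mem_iInter.2 h
  have hpost := Game.iInter_V_nat_subset_dstep hfin
  exact ⟨Game.exists_play_of_subset_dstep hpost hsafe,
    fun γ => Game.subset_V_of_subset_dstep hpost γ hsafe⟩
end
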